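/- arXiv:2103.02512 — 5 statements merged into one kernel-verified Lean document; each statement's English description precedes it below -/
import Mathlib

section
/- Let X_1,…,X_n be independent mean-zero real random variables with S = X_1+…+X_n, Var[S] ≤ σ², and |X_i| ≤ M almost surely for all i. Then for every t ≥ 0, Pr[S ≥ t] ≤ exp(−(t/(2M))·log(tM/σ² + 1)). -/
/-!
Chernoff's method. For `|x| ≤ M` and `c ≥ 0`, comparing the exponential series term by term gives
`exp (c x) ≤ 1 + c x + x² (exp (c M) - c M - 1) / M²`, so a centred variable bounded by `M` has
`E exp (c X) ≤ exp (Var X · (exp (c M) - c M - 1) / M²)`. Multiplying over the independent summands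
and choosing `c = log (1 + u) / M` with `u = t M / σ²` yields Bennett's bound
`exp (-(σ² / M²) ((1 + u) log (1 + u) - u))`; the weakened form follows from
`log (1 + u) ≥ 2 u / (2 + u)`, the first term of the series of `log ((1 + x) / (1 - x))` at
`x = u / (2 + u)`.
-/

open Real MeasureTheory ProbabilityTheory
open scoped Nat

namespace Real

theorem two_mul_div_two_add_le_log_one_add {u : ℝ} (hu : 0 ≤ u) :
    2 * u / (2 + u) ≤ log (1 + u) := by
  rcases hu.eq_or_lt with rfl | hu
  · simp
  have hseries := hasSum_log_one_add_inv (inv_pos.mpr hu)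
  rw [inv_inv] at hseries
  refine le_of_eq_of_le ?_ (le_hasSum hseries 0 fun k _ => by positivity)
  norm_num
  field_simp

theorem exp_mul_le_of_abs_le {c M x : ℝ} (hc : 0 ≤ c) (hM : 0 < M) (hx : |x| ≤ M) :
    exp (c * x) ≤ 1 + c * x + (exp (c * M) - c * M - 1) / M ^ 2 * x ^ 2 := by
  have hexp_tail (y : ℝ) : HasSum (fun n => y ^ (n + 2) / (n + 2)!) (exp y - 1 - y) := by
    have := (hasSum_nat_add_iff' 2).mpr (NormedSpace.expSeries_div_hasSum_exp y)
    simpa [Finset.sum_range_succ, ← exp_eq_exp_ℝ, sub_sub] using this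
  have hterm (n : ℕ) :
      (c * x) ^ (n + 2) / (n + 2)! ≤ x ^ 2 / M ^ 2 * ((c * M) ^ (n + 2) / (n + 2)!) := by
    rw [← mul_div_assoc]
    gcongr
    calc (c * x) ^ (n + 2) ≤ c ^ (n + 2) * (|x| ^ n * x ^ 2) := by
          rw [← sq_abs x, ← pow_add, ← mul_pow]
          exact (le_abs_self _).trans (by rw [abs_pow, abs_mul, abs_of_nonneg hc])
      _ ≤ c ^ (n + 2) * (M ^ n * x ^ 2) := by gcongr
      _ = x ^ 2 / M ^ 2 * (c * M) ^ (n + 2) := by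
          field_simp
          ring
  have htail_le := hasSum_le hterm (hexp_tail (c * x)) ((hexp_tail (c * M)).mul_left _)
  linear_combination htail_le

end Real

noncomputable def bennettFun (u : ℝ) : ℝ := (1 + u) * log (1 + u) - u

theorem half_mul_log_one_add_le_bennettFun {u : ℝ} (hu : 0 ≤ u) :
    u / 2 * log (1 + u) ≤ bennettFun u := by
  have hlog := two_mul_div_two_add_le_log_one_add hu
  rw [div_le_iff₀ (by positivity)] at hlog
  rw [bennettFun]
  linarith

namespace ProbabilityTheory

variable {Ω : Type*} [MeasurableSpace Ω] {μ : Measure Ω} [IsProbabilityMeasure μ] {M c : ℝ}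

lemma mgf_le_exp_variance_mul {Y : Ω → ℝ} (hY : AEMeasurable Y μ) (hmean : μ[Y] = 0)
    (hM : 0 < M) (hc : 0 ≤ c) (hbd : ∀ᵐ ω ∂μ, |Y ω| ≤ M) :
    mgf Y μ c ≤ exp (Var[Y; μ] * ((exp (c * M) - c * M - 1) / M ^ 2)) := by
  set K := (exp (c * M) - c * M - 1) / M ^ 2
  have hY2 : MemLp Y 2 μ := .of_bound hY.aestronglyMeasurable M hbd
  have hY1 : Integrable (fun ω => c * Y ω) μ := (hY2.integrable one_le_two).const_mul c
  have hlin : Integrable (fun ω => 1 + c * Y ω) μ := (integrable_const 1).add hY1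
  have hsq : Integrable (fun ω => K * Y ω ^ 2) μ := hY2.integrable_sq.const_mul K
  calc mgf Y μ c ≤ μ[fun ω => 1 + c * Y ω + K * Y ω ^ 2] := by
        refine integral_mono_ae ?_ (hlin.add hsq) ?_
        · exact integrable_exp_mul_of_le c M hc hY (hbd.mono fun ω hω => (le_abs_self _).trans hω)
        · filter_upwards [hbd] with ω hω
          exact exp_mul_le_of_abs_le hc hM hω
    _ = 1 + K * Var[Y; μ] := by
        rw [integral_add hlin hsq, integral_add (integrable_const 1) hY1, integral_const_mul,
          integral_const_mul, hmean, variance_of_integral_eq_zero hY hmean]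
        simp
    _ ≤ exp (Var[Y; μ] * K) := by
        linarith [add_one_le_exp (Var[Y; μ] * K)]

variable {ι : Type*} [Fintype ι] {X : ι → Ω → ℝ}

lemma iIndepFun.mgf_sum_le_exp_variance_mul (hind : iIndepFun X μ)
    (hmeas : ∀ i, Measurable (X i)) (hmean : ∀ i, μ[X i] = 0) (hM : 0 < M)
    (hbd : ∀ i, ∀ᵐ ω ∂μ, |X i ω| ≤ M) (hc : 0 ≤ c) :
    mgf (∑ i, X i) μ c ≤ exp (Var[∑ i, X i; μ] * ((exp (c * M) - c * M - 1) / M ^ 2)) := by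
  rw [hind.mgf_sum hmeas,
    IndepFun.variance_sum (fun i _ => .of_bound (hmeas i).aestronglyMeasurable M (hbd i))
      (fun i _ j _ hij => hind.indepFun hij),
    Finset.sum_mul, exp_sum]
  exact Finset.prod_le_prod (fun i _ => mgf_nonneg)
    (fun i _ => mgf_le_exp_variance_mul (hmeas i).aemeasurable (hmean i) hM hc (hbd i))

theorem iIndepFun.measureReal_sum_ge_le_exp_bennettFun (hind : iIndepFun X μ)
    (hmeas : ∀ i, Measurable (X i)) (hmean : ∀ i, μ[X i] = 0) (hM : 0 < M)
    (hbd : ∀ i, ∀ᵐ ω ∂μ, |X i ω| ≤ M) {σ : ℝ} (hσ : 0 < σ)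
    (hvar : Var[fun ω => ∑ i, X i ω; μ] ≤ σ ^ 2) {t : ℝ} (ht : 0 ≤ t) :
    μ.real {ω | t ≤ ∑ i, X i ω} ≤ exp (-(σ ^ 2 / M ^ 2) * bennettFun (t * M / σ ^ 2)) := by
  set u := t * M / σ ^ 2
  set c := log (1 + u) / M
  have hu : 0 ≤ u := by positivity
  have hc : 0 ≤ c := div_nonneg (log_nonneg (by linarith)) hM.le
  have hcM : exp (c * M) = 1 + u := by
    rw [div_mul_cancel₀ _ hM.ne', exp_log (by linarith)]
  have hcoeff : 0 ≤ (exp (c * M) - c * M - 1) / M ^ 2 :=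
    div_nonneg (by linarith [add_one_le_exp (c * M)]) (by positivity)
  have hchernoff : μ.real {ω | t ≤ ∑ i, X i ω} ≤ exp (-c * t) * mgf (∑ i, X i) μ c := by
    simpa only [Finset.sum_apply] using measure_ge_le_exp_mul_mgf t hc
      (hind.integrable_exp_mul_sum hmeas fun i _ => integrable_exp_mul_of_le c M hc
        (hmeas i).aemeasurable ((hbd i).mono fun ω hω => (le_abs_self _).trans hω))
  rw [← Finset.sum_fn] at hvar
  calc μ.real {ω | t ≤ ∑ i, X i ω}
      ≤ exp (-c * t) * mgf (∑ i, X i) μ c := hchernoff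
    _ ≤ exp (-c * t) * exp (σ ^ 2 * ((exp (c * M) - c * M - 1) / M ^ 2)) := by
        gcongr
        exact (hind.mgf_sum_le_exp_variance_mul hmeas hmean hM hbd hc).trans (by gcongr)
    _ = exp (-(σ ^ 2 / M ^ 2) * bennettFun u) := by
        rw [← exp_add, hcM, bennettFun]
        congr 1
        simp only [u, c]
        field_simp
        ring

end ProbabilityTheory

open MeasureTheory ProbabilityTheory in
theorem stmt2 {Ω : Type*} [MeasureSpace Ω] [IsProbabilityMeasure (ℙ : Measure Ω)]
    {n : ℕ} (X : Fin n → Ω → ℝ)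
    (hmeas : ∀ i, Measurable (X i))
    (hind : ProbabilityTheory.iIndepFun X ℙ)
    (hmean : ∀ i, ∫ ω, X i ω = 0)
    (σ M : ℝ) (hσ : 0 < σ) (hM : 0 < M)
    (hvar : ProbabilityTheory.variance (fun ω => ∑ i, X i ω) ℙ ≤ σ ^ 2)
    (hbd : ∀ i, ∀ᵐ ω, |X i ω| ≤ M)
    (t : ℝ) (ht : 0 ≤ t) :
    (ℙ {ω | t ≤ ∑ i, X i ω}).toReal ≤
      Real.exp (-(t / (2 * M)) * Real.log (t * M / σ ^ 2 + 1)) := by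
  have hu : 0 ≤ t * M / σ ^ 2 := by positivity
  refine (hind.measureReal_sum_ge_le_exp_bennettFun hmeas hmean hM hbd hσ hvar ht).trans ?_
  rw [exp_le_exp]
  calc -(σ ^ 2 / M ^ 2) * bennettFun (t * M / σ ^ 2)
      ≤ -(σ ^ 2 / M ^ 2) * (t * M / σ ^ 2 / 2 * log (1 + t * M / σ ^ 2)) :=
        mul_le_mul_of_nonpos_left (half_mul_log_one_add_le_bennettFun hu)
          (neg_nonpos.mpr (by positivity))
    _ = -(t / (2 * M)) * log (t * M / σ ^ 2 + 1) := by
        rw [add_comm]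
        field_simp
end

section
/- Let (P,d) be a finite metric space with groups P_1,…,P_ℓ ⊆ P and nonnegative weights w_j on P (with w_j(u)=0 for u ∉ P_j). Let C* be a set of k centers minimizing faircost(C) = max_j Σ_{u∈P_j} w_j(u)·d(u,C)^p, with optimal cost z*. For z ≥ z*, define vol_v(r) = max_j Σ_{u: d(v,u)≤r} w_j(u)·r^p and Δ_z(v) = min{r ≥ 0 : vol_v(r) ≥ z}. Then for every point v with Σ_j w_j(v) > 0, we have d(v, C*) ≤ 2·Δ_z(v). -/
open scoped Classical in
/-- `vol_v(r) = max_j Σ_{u : d(v,u) ≤ r} w_j(u) · r^p`. -/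
noncomputable def vol {P : Type*} [MetricSpace P] [Fintype P] {ℓ : ℕ}
    (w : Fin ℓ → P → ℝ) (p : ℝ) (v : P) (r : ℝ) : ℝ :=
  ⨆ j : Fin ℓ, ∑ u ∈ Finset.univ.filter (fun u => dist v u ≤ r), w j u * r ^ p

/-- `Δ_z(v) = min {r ≥ 0 : vol_v(r) ≥ z}`. -/
noncomputable def Delta {P : Type*} [MetricSpace P] [Fintype P] {ℓ : ℕ}
    (w : Fin ℓ → P → ℝ) (p : ℝ) (z : ℝ) (v : P) : ℝ :=
  sInf {r : ℝ | 0 ≤ r ∧ z ≤ vol w p v r}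

/-- `faircost(C) = max_j Σ_u w_j(u) · d(u,C)^p`. -/
noncomputable def fairCost {P : Type*} [MetricSpace P] [Fintype P] {ℓ : ℕ}
    (w : Fin ℓ → P → ℝ) (p : ℝ) (C : Finset P) : ℝ :=
  ⨆ j : Fin ℓ, ∑ u, w j u * Metric.infDist u ↑C ^ p

lemma le_vol' {P : Type*} [MetricSpace P] [Fintype P] {ℓ : ℕ}
    (w : Fin ℓ → P → ℝ) (p : ℝ) (v : P) (r : ℝ) (j : Fin ℓ) :
    ∑ u ∈ Finset.univ.filter (fun u => dist v u ≤ r), w j u * r ^ p ≤ vol w p v r := by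
  classical
  unfold vol
  exact le_ciSup (f := fun j => ∑ u ∈ Finset.univ.filter (fun u => dist v u ≤ r),
    w j u * r ^ p) (Set.Finite.bddAbove (Set.finite_range _)) j

lemma vol_le' {P : Type*} [MetricSpace P] [Fintype P] {ℓ : ℕ} (hℓ : 0 < ℓ)
    (w : Fin ℓ → P → ℝ) (p : ℝ) (v : P) (r : ℝ) (b : ℝ)
    (h : ∀ j : Fin ℓ, ∑ u ∈ Finset.univ.filter (fun u => dist v u ≤ r), w j u * r ^ p ≤ b) :
    vol w p v r ≤ b := by
  classical
  have : Nonempty (Fin ℓ) := ⟨⟨0, hℓ⟩⟩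
  unfold vol
  exact ciSup_le h

lemma le_fairCost' {P : Type*} [MetricSpace P] [Fintype P] {ℓ : ℕ}
    (w : Fin ℓ → P → ℝ) (p : ℝ) (C : Finset P) (j : Fin ℓ) :
    ∑ u, w j u * Metric.infDist u ↑C ^ p ≤ fairCost w p C := by
  unfold fairCost
  exact le_ciSup (f := fun j => ∑ u, w j u * Metric.infDist u ↑C ^ p)
    (Set.Finite.bddAbove (Set.finite_range _)) j

theorem stmt3 {P : Type*} [MetricSpace P] [Fintype P] {ℓ : ℕ} (hℓ : 0 < ℓ)
    (w : Fin ℓ → P → ℝ) (hw : ∀ j u, 0 ≤ w j u)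
    (p : ℝ) (hp : 1 ≤ p) (k : ℕ)
    (Cstar : Finset P) (hCcard : Cstar.card = k) (hCne : Cstar.Nonempty)
    (hopt : ∀ C : Finset P, C.card = k → C.Nonempty → fairCost w p Cstar ≤ fairCost w p C)
    (z : ℝ) (hz : fairCost w p Cstar ≤ z)
    (v : P) (hv : 0 < ∑ j, w j v) :
    Metric.infDist v ↑Cstar ≤ 2 * Delta w p z v := by
  classical
  have hne : Nonempty (Fin ℓ) := ⟨⟨0, hℓ⟩⟩
  have hp0 : 0 < p := lt_of_lt_of_le one_pos hp
  set D := Metric.infDist v ↑Cstar with hD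
  have hD0 : 0 ≤ D := Metric.infDist_nonneg
  obtain ⟨j₀, hj₀⟩ : ∃ j, 0 < w j v := by
    by_contra h
    push_neg at h
    have : ∑ j, w j v ≤ 0 := Finset.sum_nonpos fun j _ => h j
    linarith
  -- z is nonnegative
  have hfc0 : (0:ℝ) ≤ fairCost w p Cstar := by
    have h1 : (0:ℝ) ≤ ∑ u, w j₀ u * Metric.infDist u ↑Cstar ^ p :=
      Finset.sum_nonneg fun u _ =>
        mul_nonneg (hw j₀ u) (Real.rpow_nonneg Metric.infDist_nonneg p)
    exact le_trans h1 (le_fairCost' w p Cstar j₀)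
  have hz0 : (0:ℝ) ≤ z := le_trans hfc0 hz
  -- the set defining Delta
  set S := {r : ℝ | 0 ≤ r ∧ z ≤ vol w p v r} with hS
  -- S is nonempty
  have hSne : S.Nonempty := by
    refine ⟨max 1 (z / w j₀ v), le_trans zero_le_one (le_max_left _ _), ?_⟩
    set r₁ := max 1 (z / w j₀ v) with hr₁
    have h1r : (1:ℝ) ≤ r₁ := le_max_left _ _
    have hr0 : (0:ℝ) ≤ r₁ := le_trans zero_le_one h1r
    have hvmem : v ∈ Finset.univ.filter (fun u => dist v u ≤ r₁) := by
      simp [dist_self, hr0]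
    have hsum : w j₀ v * r₁ ^ p ≤
        ∑ u ∈ Finset.univ.filter (fun u => dist v u ≤ r₁), w j₀ u * r₁ ^ p :=
      Finset.single_le_sum (f := fun u => w j₀ u * r₁ ^ p)
        (fun u _ => mul_nonneg (hw j₀ u) (Real.rpow_nonneg hr0 p)) hvmem
    have hzle : z ≤ w j₀ v * r₁ ^ p := by
      have h1 : z / w j₀ v ≤ r₁ := le_max_right _ _
      have h2 : z ≤ w j₀ v * r₁ := by
        have := mul_le_mul_of_nonneg_left h1 (le_of_lt hj₀)
        rwa [mul_div_cancel₀ z (ne_of_gt hj₀)] at this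
      have h3 : r₁ ≤ r₁ ^ p := by
        calc r₁ = r₁ ^ (1:ℝ) := (Real.rpow_one r₁).symm
        _ ≤ r₁ ^ p := Real.rpow_le_rpow_of_exponent_le h1r hp
      calc z ≤ w j₀ v * r₁ := h2
      _ ≤ w j₀ v * r₁ ^ p := mul_le_mul_of_nonneg_left h3 (le_of_lt hj₀)
    exact le_trans (le_trans hzle hsum) (le_vol' w p v r₁ j₀)
  -- every element of S is at least D/2
  have key : ∀ r ∈ S, D / 2 ≤ r := by
    intro r hr
    by_contra hlt
    push_neg at hlt
    obtain ⟨hr0, hzr⟩ := hr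
    have hrD : r < D - r := by linarith
    have hDr0 : 0 < D - r := lt_of_le_of_lt hr0 hrD
    set B := Finset.univ.filter (fun u => dist v u ≤ r) with hB
    set T : Fin ℓ → ℝ := fun j => ∑ u ∈ B, w j u with hT
    obtain ⟨j₁, hj₁⟩ : ∃ j₁, ∀ j, T j ≤ T j₁ := Finite.exists_max T
    -- vol ≤ T j₁ * r^p
    have hvol : vol w p v r ≤ T j₁ * r ^ p := by
      refine vol_le' hℓ w p v r _ fun j => ?_
      calc (∑ u ∈ B, w j u * r ^ p) = T j * r ^ p := by
            rw [hT, Finset.sum_mul]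
      _ ≤ T j₁ * r ^ p :=
            mul_le_mul_of_nonneg_right (hj₁ j) (Real.rpow_nonneg hr0 p)
    have hz1 : z ≤ T j₁ * r ^ p := le_trans hzr hvol
    -- T j₁ * (D-r)^p ≤ fairCost ≤ z
    have hlow : T j₁ * (D - r) ^ p ≤ fairCost w p Cstar := by
      have h1 : T j₁ * (D - r) ^ p = ∑ u ∈ B, w j₁ u * (D - r) ^ p := by
        rw [hT, Finset.sum_mul]
      have h2 : ∑ u ∈ B, w j₁ u * (D - r) ^ p ≤
          ∑ u ∈ B, w j₁ u * Metric.infDist u ↑Cstar ^ p := by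
        refine Finset.sum_le_sum fun u hu => ?_
        have hdu : dist v u ≤ r := by
          simpa [hB] using hu
        have hinf : D - r ≤ Metric.infDist u ↑Cstar := by
          have := Metric.infDist_le_infDist_add_dist (x := v) (y := u) (s := (↑Cstar : Set P))
          linarith
        exact mul_le_mul_of_nonneg_left
          (Real.rpow_le_rpow (le_of_lt hDr0) hinf (le_of_lt hp0)) (hw j₁ u)
      have h3 : ∑ u ∈ B, w j₁ u * Metric.infDist u ↑Cstar ^ p ≤
          ∑ u, w j₁ u * Metric.infDist u ↑Cstar ^ p := by
        refine Finset.sum_le_sum_of_subset_of_nonneg (Finset.filter_subset _ _)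
          fun u _ _ => mul_nonneg (hw j₁ u) (Real.rpow_nonneg Metric.infDist_nonneg p)
      calc T j₁ * (D - r) ^ p = ∑ u ∈ B, w j₁ u * (D - r) ^ p := h1
      _ ≤ ∑ u ∈ B, w j₁ u * Metric.infDist u ↑Cstar ^ p := h2
      _ ≤ ∑ u, w j₁ u * Metric.infDist u ↑Cstar ^ p := h3
      _ ≤ fairCost w p Cstar := le_fairCost' w p Cstar j₁
    -- T j₁ > 0
    have hTpos : 0 < T j₁ := by
      have hvmem : v ∈ B := by simp [hB, dist_self, hr0]
      have : w j₀ v ≤ T j₀ :=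
        Finset.single_le_sum (f := fun u => w j₀ u) (fun u _ => hw j₀ u) hvmem
      exact lt_of_lt_of_le (lt_of_lt_of_le hj₀ this) (hj₁ j₀)
    -- contradiction
    have hc1 : T j₁ * (D - r) ^ p ≤ T j₁ * r ^ p :=
      le_trans (le_trans hlow hz) hz1
    have hc2 : (D - r) ^ p ≤ r ^ p := le_of_mul_le_mul_left hc1 hTpos
    have hc3 : r ^ p < (D - r) ^ p := Real.rpow_lt_rpow hr0 hrD hp0
    linarith
  have hfin : D / 2 ≤ sInf S := le_csInf hSne key
  have : Delta w p z v = sInf S := rfl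
  rw [this]
  linarith
end

section
/- Let (x',y') be a (1−γ)-restricted fractional solution with γ < 1/2, i.e., y'_u ≥ 1−γ for u ∈ P' and y'_u = 0 otherwise. For each v ∈ P' let v' ≠ v be a closest point to v in P'. Define x''_{vv} = y'_v, x''_{vv'} = 1 − y'_v, and x''_{vu} = 0 for u ∉ {v, v'}. Then (x'', y') satisfies the LP constraints: Σ_u x''_{vu} = 1 and x''_{vu} ≤ y'_u for all v, u ∈ P', and its cost Σ_{v} w'_j(v)·Σ_u d(v,u)^p x''_{vu} is at most that of any feasible assignment x' with Σ_u x'_{vu} = 1, x'_{vu} ≤ y'_u. -/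
theorem stmt11 {P : Type*} [MetricSpace P] [Fintype P] [DecidableEq P]
    (p γ : ℝ) (hp : 1 ≤ p) (hγ0 : 0 < γ) (hγ : γ < 1 / 2)
    (y' : P → ℝ) (hy1 : ∀ u, 1 - γ ≤ y' u) (hy2 : ∀ u, y' u ≤ 1)
    (w' : P → ℝ) (hw' : ∀ u, 0 ≤ w' u)
    (nn : P → P) (hnn : ∀ v, nn v ≠ v ∧ ∀ u, u ≠ v → dist v (nn v) ≤ dist v u)
    (x'' : P → P → ℝ)
    (hx'' : ∀ v u, x'' v u = if u = v then y' v else if u = nn v then 1 - y' v else 0) :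
    (∀ v, ∑ u, x'' v u = 1) ∧ (∀ v u, x'' v u ≤ y' u) ∧
      ∀ x' : P → P → ℝ, (∀ v u, 0 ≤ x' v u) → (∀ v, ∑ u, x' v u = 1) →
        (∀ v u, x' v u ≤ y' u) →
        ∑ v, w' v * ∑ u, dist v u ^ p * x'' v u ≤
          ∑ v, w' v * ∑ u, dist v u ^ p * x' v u := by
  have hp0 : (0:ℝ) ≤ p := by linarith
  have hpne : p ≠ 0 := by linarith
  refine ⟨?_, ?_, ?_⟩
  · intro v
    have hne := (hnn v).1
    have hdec : ∀ u, x'' v u =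
        (if u = v then y' v else 0) + (if u = nn v then 1 - y' v else 0) := by
      intro u
      rw [hx'']
      by_cases h1 : u = v
      · subst h1; rw [if_pos rfl, if_pos rfl, if_neg (Ne.symm hne)]; ring
      · by_cases h2 : u = nn v <;> simp [h1, h2, hne]
    simp only [hdec]
    rw [Finset.sum_add_distrib]
    simp [Finset.sum_ite_eq']
  · intro v u
    rw [hx'']
    by_cases h1 : u = v
    · simp [h1]
    · by_cases h2 : u = nn v
      · subst h2
        rw [if_neg h1, if_pos rfl]
        have := hy1 v; have := hy1 (nn v); linarith
      · rw [if_neg h1, if_neg h2]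
        have := hy1 u; linarith
  · intro x' hx0 hx1 hxy
    apply Finset.sum_le_sum
    intro v _
    apply mul_le_mul_of_nonneg_left _ (hw' v)
    have hne := (hnn v).1
    have hc0 : (0:ℝ) ≤ dist v (nn v) ^ p := Real.rpow_nonneg dist_nonneg p
    have hL : ∑ u, dist v u ^ p * x'' v u = dist v (nn v) ^ p * (1 - y' v) := by
      have hterm : ∀ u, dist v u ^ p * x'' v u =
          if u = nn v then dist v (nn v) ^ p * (1 - y' v) else 0 := by
        intro u
        rw [hx'']
        by_cases h1 : u = v
        · subst h1
          rw [if_pos rfl, if_neg (Ne.symm hne), dist_self, Real.zero_rpow hpne, zero_mul]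
        · by_cases h2 : u = nn v
          · subst h2; rw [if_neg h1, if_pos rfl, if_pos rfl]
          · rw [if_neg h1, if_neg h2, if_neg h2, mul_zero]
      simp only [hterm]
      simp [Finset.sum_ite_eq']
    rw [hL]
    have step1 : ∀ u, (if u = v then 0 else dist v (nn v) ^ p * x' v u)
        ≤ dist v u ^ p * x' v u := by
      intro u
      by_cases h1 : u = v
      · rw [if_pos h1]
        exact mul_nonneg (Real.rpow_nonneg dist_nonneg p) (hx0 v u)
      · rw [if_neg h1]
        exact mul_le_mul_of_nonneg_right
          (Real.rpow_le_rpow dist_nonneg ((hnn v).2 u h1) hp0) (hx0 v u)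
    have h2 : ∑ u, (if u = v then 0 else dist v (nn v) ^ p * x' v u)
        = dist v (nn v) ^ p * (1 - x' v v) := by
      have hre : ∀ u, (if u = v then 0 else dist v (nn v) ^ p * x' v u)
          = dist v (nn v) ^ p * x' v u - (if u = v then dist v (nn v) ^ p * x' v v else 0) := by
        intro u
        by_cases h1 : u = v
        · subst h1; simp
        · simp [h1]
      simp only [hre]
      rw [Finset.sum_sub_distrib, ← Finset.mul_sum, hx1 v]
      simp [Finset.sum_ite_eq']
      ring
    calc dist v (nn v) ^ p * (1 - y' v)
        ≤ dist v (nn v) ^ p * (1 - x' v v) := by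
          apply mul_le_mul_of_nonneg_left _ hc0
          linarith [hxy v v]
      _ = ∑ u, (if u = v then 0 else dist v (nn v) ^ p * x' v u) := h2.symm
      _ ≤ ∑ u, dist v u ^ p * x' v u := Finset.sum_le_sum (fun u _ => step1 u)
end

section
/- Consider a finite metric space on n = k + t points where t = ⌊√k⌋, k ≥ 1, all pairwise distances equal 1, with one group P_A = A for every subset A of size t (weights w_A = indicator of A). Then every set C of k centers has fair cost max_A Σ_{u∈A} d(u,C)^p = t. -/
theorem stmt16 {P : Type*} [MetricSpace P] [Fintype P]
    (k : ℕ) (hk : 1 ≤ k) (hcard : Fintype.card P = k + Nat.sqrt k)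
    (huniform : ∀ u v : P, u ≠ v → dist u v = 1)
    (p : ℝ) (hp : 1 ≤ p)
    (C : Finset P) (hC : C.card = k) :
    (∀ A : Finset P, A.card = Nat.sqrt k →
        ∑ u ∈ A, Metric.infDist u ↑C ^ p ≤ (Nat.sqrt k : ℝ)) ∧
      ∃ A : Finset P, A.card = Nat.sqrt k ∧
        ∑ u ∈ A, Metric.infDist u ↑C ^ p = (Nat.sqrt k : ℝ) := by
  classical
  have hp0 : p ≠ 0 := by linarith
  have hCne : (C : Set P).Nonempty := by
    rw [Finset.coe_nonempty, ← Finset.card_pos, hC]; omega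
  have hmem : ∀ u : P, u ∈ C → Metric.infDist u ↑C ^ p = 0 := by
    intro u hu
    rw [Metric.infDist_zero_of_mem (by exact_mod_cast hu), Real.zero_rpow hp0]
  have hnot : ∀ u : P, u ∉ C → Metric.infDist u ↑C ^ p = 1 := by
    intro u hu
    have h1 : Metric.infDist u ↑C = 1 := by
      apply le_antisymm
      · obtain ⟨c, hc⟩ := hCne
        calc Metric.infDist u ↑C ≤ dist u c := Metric.infDist_le_dist_of_mem hc
          _ = 1 := huniform u c (fun h => hu (by exact_mod_cast h ▸ hc))
      · by_contra hlt
        push_neg at hlt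
        obtain ⟨y, hy, hdy⟩ := (Metric.infDist_lt_iff hCne).mp hlt
        rw [huniform u y (fun h => hu (by exact_mod_cast h ▸ hy))] at hdy
        exact lt_irrefl 1 hdy
    rw [h1, Real.one_rpow]
  constructor
  · intro A hA
    calc ∑ u ∈ A, Metric.infDist u ↑C ^ p ≤ ∑ u ∈ A, 1 := by
          apply Finset.sum_le_sum
          intro u hu
          by_cases h : u ∈ C
          · rw [hmem u h]; norm_num
          · rw [hnot u h]
      _ = (Nat.sqrt k : ℝ) := by rw [Finset.sum_const, hA]; simp
  · refine ⟨Cᶜ, ?_, ?_⟩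
    · rw [Finset.card_compl, hC, hcard]; omega
    · rw [Finset.sum_congr rfl (fun u hu => hnot u (Finset.mem_compl.mp hu)),
        Finset.sum_const, Finset.card_compl, hC, hcard]
      simp
end

section
/- In the uniform metric on n = k + t points (t = ⌊√k⌋) with a group for every t-subset, the fractional solution y_u = k/n for all u, x_{uu} = k/n, x_{u,v_u} = t/n for some fixed v_u ≠ u, satisfies the LP constraints (Σ_v x_{uv} = 1, Σ_v y_v ≤ k, x_{uv} ≤ y_v, nonnegativity) and has LP cost max_A Σ_{u∈A} Σ_v d(u,v)^p·x_{uv} = t²/n ≤ 1. -/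
/-!
Each point keeps a `k/n` fraction of itself open and sends the remaining `t/n` to one other
point, at distance `1`; so each point pays exactly `t/n`, and a group of `t` points pays
`t²/n ≤ 1`, because `t² ≤ k ≤ n`.
-/

open Finset

section SplitAssignment

variable {P : Type*} [DecidableEq P] (vsel : P → P)

def splitAssignment (a b : ℝ) (u v : P) : ℝ :=
  if v = u then a else if v = vsel u then b else 0

variable {vsel}

theorem splitAssignment_nonneg {a b : ℝ} (ha : 0 ≤ a) (hb : 0 ≤ b) (u v : P) :
    0 ≤ splitAssignment vsel a b u v := by
  unfold splitAssignment
  split_ifs <;> linarith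

theorem splitAssignment_le {a b : ℝ} (ha : 0 ≤ a) (hba : b ≤ a) (u v : P) :
    splitAssignment vsel a b u v ≤ a := by
  unfold splitAssignment
  split_ifs <;> linarith

variable [Fintype P]

theorem sum_mul_splitAssignment (hvsel : ∀ u, vsel u ≠ u) (c : P → ℝ) (a b : ℝ) (u : P) :
    ∑ v, c v * splitAssignment vsel a b u v = c u * a + c (vsel u) * b := by
  rw [Fintype.sum_eq_add u (vsel u) (hvsel u).symm fun v hv => by
    simp [splitAssignment, hv.1, hv.2]]
  simp [splitAssignment, hvsel u]

theorem sum_splitAssignment (hvsel : ∀ u, vsel u ≠ u) (a b : ℝ) (u : P) :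
    ∑ v, splitAssignment vsel a b u v = a + b := by
  simpa using sum_mul_splitAssignment hvsel (fun _ => 1) a b u

theorem sum_dist_rpow_mul_splitAssignment [MetricSpace P] (hvsel : ∀ u, vsel u ≠ u)
    (hdist : ∀ u, dist u (vsel u) = 1) {p : ℝ} (hp : p ≠ 0) (a b : ℝ) (A : Finset P) :
    ∑ u ∈ A, ∑ v, dist u v ^ p * splitAssignment vsel a b u v = #A * b := by
  rw [sum_congr rfl fun u _ => sum_mul_splitAssignment hvsel (dist u · ^ p) a b u]
  simp [hdist, Real.zero_rpow hp]

end SplitAssignment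

theorem sqrt_sq_div_add_sqrt_le_one (k : ℕ) :
    (Nat.sqrt k : ℝ) ^ 2 / ((k + Nat.sqrt k : ℕ) : ℝ) ≤ 1 := by
  have hsq : ((Nat.sqrt k ^ 2 : ℕ) : ℝ) ≤ k := by exact_mod_cast Nat.sqrt_le' k
  apply div_le_one_of_le₀ <;> push_cast at * <;> linarith [(Nat.sqrt k).cast_nonneg (α := ℝ)]

theorem stmt17_general {P : Type*} [MetricSpace P] [Fintype P] [DecidableEq P]
    (k : ℕ) (hcard : Fintype.card P = k + Nat.sqrt k)
    (huniform : ∀ u v : P, u ≠ v → dist u v = 1)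
    (p : ℝ) (hp : 1 ≤ p)
    (vsel : P → P) (hvsel : ∀ u, vsel u ≠ u)
    (x : P → P → ℝ) (y : P → ℝ)
    (hx : ∀ u v, x u v = if v = u then (k : ℝ) / (Fintype.card P : ℝ)
      else if v = vsel u then (Nat.sqrt k : ℝ) / (Fintype.card P : ℝ) else 0)
    (hy : ∀ v, y v = (k : ℝ) / (Fintype.card P : ℝ)) :
    (∀ u v, 0 ≤ x u v) ∧ (∀ u, ∑ v, x u v = 1) ∧ (∑ v, y v ≤ (k : ℝ)) ∧
      (∀ u v, x u v ≤ y v) ∧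
      (∀ A : Finset P, A.card = Nat.sqrt k →
        ∑ u ∈ A, ∑ v, dist u v ^ p * x u v = (Nat.sqrt k : ℝ) ^ 2 / (Fintype.card P : ℝ)) ∧
      (Nat.sqrt k : ℝ) ^ 2 / (Fintype.card P : ℝ) ≤ 1 := by
  set n : ℝ := (Fintype.card P : ℝ)
  obtain rfl : x = splitAssignment vsel (k / n) (Nat.sqrt k / n) := funext₂ hx
  have hsqrt_le : (Nat.sqrt k : ℝ) / n ≤ k / n := by
    gcongr
    exact_mod_cast Nat.sqrt_le_self k
  refine ⟨splitAssignment_nonneg (by positivity) (by positivity), fun u => ?_, ?_,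
    fun u v => (splitAssignment_le (by positivity) hsqrt_le u v).trans_eq (hy v).symm,
    fun A hA => ?_, ?_⟩
  · have : Nonempty P := ⟨u⟩
    rw [sum_splitAssignment hvsel, ← add_div, div_eq_one_iff_eq (by positivity)]
    simp [n, hcard]
  · simp only [hy, sum_const, card_univ, nsmul_eq_mul]
    rw [mul_div_left_comm]
    -- `n / n ≤ 1` holds also for `P` empty, where `n / n = 0`
    exact mul_le_of_le_one_right k.cast_nonneg (div_self_le_one n)
  · rw [sum_dist_rpow_mul_splitAssignment hvsel (fun u => huniform u _ (hvsel u).symm)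
      (by positivity) _ _ A, hA]
    ring
  · simpa [n, hcard] using sqrt_sq_div_add_sqrt_le_one k

theorem stmt17 {P : Type*} [MetricSpace P] [Fintype P] [DecidableEq P]
    (k : ℕ) (hk : 1 ≤ k) (hcard : Fintype.card P = k + Nat.sqrt k)
    (huniform : ∀ u v : P, u ≠ v → dist u v = 1)
    (p : ℝ) (hp : 1 ≤ p)
    (vsel : P → P) (hvsel : ∀ u, vsel u ≠ u)
    (x : P → P → ℝ) (y : P → ℝ)
    (hx : ∀ u v, x u v = if v = u then (k : ℝ) / (Fintype.card P : ℝ)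
      else if v = vsel u then (Nat.sqrt k : ℝ) / (Fintype.card P : ℝ) else 0)
    (hy : ∀ v, y v = (k : ℝ) / (Fintype.card P : ℝ)) :
    (∀ u v, 0 ≤ x u v) ∧ (∀ u, ∑ v, x u v = 1) ∧ (∑ v, y v ≤ (k : ℝ)) ∧
      (∀ u v, x u v ≤ y v) ∧
      (∀ A : Finset P, A.card = Nat.sqrt k →
        ∑ u ∈ A, ∑ v, dist u v ^ p * x u v = (Nat.sqrt k : ℝ) ^ 2 / (Fintype.card P : ℝ)) ∧
      (Nat.sqrt k : ℝ) ^ 2 / (Fintype.card P : ℝ) ≤ 1 :=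
  stmt17_general k hcard huniform p hp vsel hvsel x y hx hy
end
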